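/- arXiv:2206.14872 — 10 statements merged into one kernel-verified Lean document; each statement's English description precedes it below -/
import Mathlib

section
/- Let X be a real Hilbert space and let f : X → ℝ∪{+∞} be convex, lower semicontinuous, and proper. Then for all x, x* in X, f(x) + f*(x*) ≥ F_{∂f}(x, x*), where F_{∂f} is the Fitzpatrick function of the subdifferential operator ∂f. -/
open scoped RealInnerProductSpace

/-- `f` is proper, convex and lower semicontinuous (values in ℝ ∪ {+∞}, encoded in `EReal`). -/
def IsProperConvexLsc {X : Type*} [NormedAddCommGroup X] [InnerProductSpace ℝ X]
    (f : X → EReal) : Prop :=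
  (∀ z, f z ≠ ⊥) ∧ (∃ z, f z ≠ ⊤) ∧ LowerSemicontinuous f ∧
  (∀ u v : X, ∀ a b : ℝ, 0 ≤ a → 0 ≤ b → a + b = 1 →
    f (a • u + b • v) ≤ (a : EReal) * f u + (b : EReal) * f v)

/-- The Fenchel conjugate of `f`. -/
noncomputable def conj {X : Type*} [NormedAddCommGroup X] [InnerProductSpace ℝ X]
    (f : X → EReal) (v : X) : EReal :=
  ⨆ z : X, (((⟪z, v⟫ : ℝ) : EReal) - f z)

/-- The subdifferential of `f`. -/
def subdiff {X : Type*} [NormedAddCommGroup X] [InnerProductSpace ℝ X]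
    (f : X → EReal) (u : X) : Set X :=
  {v | ∀ y, f u + ((⟪y - u, v⟫ : ℝ) : EReal) ≤ f y}

/-- The Fitzpatrick function of a set-valued operator. -/
noncomputable def Fitz {X : Type*} [NormedAddCommGroup X] [InnerProductSpace ℝ X]
    (A : X → Set X) (x xs : X) : EReal :=
  ⨆ (p : X × X) (_ : p.2 ∈ A p.1),
    ((⟪x, p.2⟫ + ⟪p.1, xs⟫ - ⟪p.1, p.2⟫ : ℝ) : EReal)

theorem stmt_1 {X : Type*} [NormedAddCommGroup X] [InnerProductSpace ℝ X] [CompleteSpace X]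
    (f : X → EReal) (hf : IsProperConvexLsc f) (x xs : X) :
    f x + conj f xs ≥ Fitz (subdiff f) x xs := by
  rw [ge_iff_le, Fitz]
  refine iSup_le fun p => iSup_le fun hp => ?_
  set a := p.1
  set as := p.2
  -- f a is a real number
  have hbot := hf.1 a
  have htop : f a ≠ ⊤ := by
    intro h
    obtain ⟨z, hz⟩ := hf.2.1
    have := hp z
    rw [h] at this
    have : (⊤ : EReal) ≤ f z := by
      simpa using this
    exact hz (top_le_iff.mp this)
  lift f a to ℝ using ⟨htop, hbot⟩ with r hr
  have h1 : ((r + ⟪x - a, as⟫ : ℝ) : EReal) ≤ f x := by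
    have := hp x
    rw [← hr] at this
    simpa [← EReal.coe_add] using this
  have h2 : ((⟪a, xs⟫ - r : ℝ) : EReal) ≤ conj f xs := by
    have : (((⟪a, xs⟫ : ℝ) : EReal) - f a) ≤ conj f xs := by
      rw [conj]; exact le_iSup (fun z : X => (((⟪z, xs⟫ : ℝ) : EReal) - f z)) a
    rw [← hr] at this
    simpa [← EReal.coe_sub] using this
  calc ((⟪x, as⟫ + ⟪a, xs⟫ - ⟪a, as⟫ : ℝ) : EReal)
      = ((r + ⟪x - a, as⟫ : ℝ) : EReal) + ((⟪a, xs⟫ - r : ℝ) : EReal) := by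
        rw [← EReal.coe_add]
        congr 1
        rw [inner_sub_left]
        ring
    _ ≤ f x + conj f xs := add_le_add h1 h2
end

section
/- Let X be a real Hilbert space, let A : X ⇉ X be maximally monotone, and let x, x* ∈ X. Then for every γ > 0, F_A(x, x*) − ⟨x, x*⟩ ≥ ‖x − J_{γA}(x + γx*)‖²/γ. -/
open scoped RealInnerProductSpace

/-- A set-valued operator `A : X ⇉ X` is maximally monotone. -/
def IsMaxMonotone {X : Type*} [NormedAddCommGroup X] [InnerProductSpace ℝ X]
    (A : X → Set X) : Prop :=
  (∀ a as b bs, as ∈ A a → bs ∈ A b → 0 ≤ ⟪a - b, as - bs⟫) ∧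
  (∀ z zs, (∀ a as, as ∈ A a → 0 ≤ ⟪z - a, zs - as⟫) → zs ∈ A z)

/-- `J` is the resolvent `J_{γA} = (Id + γA)⁻¹`:
`J z = p` if and only if `z ∈ p + γ A p`, i.e. `γ⁻¹ • (z - p) ∈ A p`. -/
def IsResolvent {X : Type*} [NormedAddCommGroup X] [InnerProductSpace ℝ X]
    (A : X → Set X) (γ : ℝ) (J : X → X) : Prop :=
  ∀ z p, J z = p ↔ γ⁻¹ • (z - p) ∈ A p

theorem stmt_8 {X : Type*} [NormedAddCommGroup X] [InnerProductSpace ℝ X] [CompleteSpace X]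
    (A : X → Set X) (hA : IsMaxMonotone A) (x xs : X) (γ : ℝ) (hγ : 0 < γ)
    (J : X → X) (hJ : IsResolvent A γ J) :
    Fitz A x xs - ((⟪x, xs⟫ : ℝ) : EReal) ≥ ((‖x - J (x + γ • xs)‖ ^ 2 / γ : ℝ) : EReal) := by
  set z := x + γ • xs with hz
  set p := J z with hp
  have ha : γ⁻¹ • (z - p) ∈ A p := (hJ z p).mp rfl
  -- value of Fitzpatrick integrand at (p, γ⁻¹ • (z - p))
  have hle : ((⟪x, γ⁻¹ • (z - p)⟫ + ⟪p, xs⟫ - ⟪p, γ⁻¹ • (z - p)⟫ : ℝ) : EReal)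
      ≤ Fitz A x xs := by
    refine le_trans ?_ (le_iSup _ (p, γ⁻¹ • (z - p)))
    exact le_iSup_iff.mpr fun b hb => hb ha
  have key : (⟪x, γ⁻¹ • (z - p)⟫ + ⟪p, xs⟫ - ⟪p, γ⁻¹ • (z - p)⟫ : ℝ)
      = ‖x - p‖ ^ 2 / γ + ⟪x, xs⟫ := by
    have h1 : (⟪x, γ⁻¹ • (z - p)⟫ : ℝ) = γ⁻¹ * ⟪x, z - p⟫ := real_inner_smul_right _ _ _
    have h2 : (⟪p, γ⁻¹ • (z - p)⟫ : ℝ) = γ⁻¹ * ⟪p, z - p⟫ := real_inner_smul_right _ _ _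
    have h3 : (⟪x, z - p⟫ : ℝ) - ⟪p, z - p⟫ = ⟪x - p, z - p⟫ := (inner_sub_left _ _ _).symm
    have h4 : z - p = (x - p) + γ • xs := by rw [hz]; abel
    have h5 : (⟪x - p, z - p⟫ : ℝ) = ‖x - p‖ ^ 2 + γ * ⟪x - p, xs⟫ := by
      rw [h4, inner_add_right, real_inner_smul_right, real_inner_self_eq_norm_sq]
    have h6 : (⟪x - p, xs⟫ : ℝ) = ⟪x, xs⟫ - ⟪p, xs⟫ := inner_sub_left _ _ _
    have hγ' : γ ≠ 0 := hγ.ne'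
    rw [h1, h2]
    field_simp
    linear_combination h3 + h5 + γ * h6
  calc ((‖x - p‖ ^ 2 / γ : ℝ) : EReal)
      = ((‖x - p‖ ^ 2 / γ + ⟪x, xs⟫ : ℝ) : EReal) - ((⟪x, xs⟫ : ℝ) : EReal) := by
        rw [← EReal.coe_sub]; norm_num
    _ ≤ Fitz A x xs - ((⟪x, xs⟫ : ℝ) : EReal) := by
        apply EReal.sub_le_sub _ le_rfl
        rw [← key]; exact hle
end

section
/- (Carlier's inequality) Let X be a real Hilbert space, let f : X → ℝ∪{+∞} be convex, lower semicontinuous, and proper, let x, x* ∈ X, and let γ > 0. Then f(x) + f*(x*) − ⟨x, x*⟩ ≥ ‖x − Prox_{γf}(x + γx*)‖²/γ. -/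
open scoped RealInnerProductSpace

/-- `P` is the proximal mapping of `γ f`: for every `z`, `P z` is
the unique minimizer over `y` of `f(y) + ‖y − z‖²/(2γ)`. -/
def IsProx {X : Type*} [NormedAddCommGroup X] [InnerProductSpace ℝ X]
    (f : X → EReal) (γ : ℝ) (P : X → X) : Prop :=
  ∀ z, (∀ y, f (P z) + ((‖P z - z‖ ^ 2 / (2 * γ) : ℝ) : EReal)
              ≤ f y + ((‖y - z‖ ^ 2 / (2 * γ) : ℝ) : EReal)) ∧
    ∀ p, (∀ y, f p + ((‖p - z‖ ^ 2 / (2 * γ) : ℝ) : EReal)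
              ≤ f y + ((‖y - z‖ ^ 2 / (2 * γ) : ℝ) : EReal)) → p = P z

/-!
With `p = Prox_{γf}(w)` and `w = x + γx*`, the optimality of `p` makes `(w - p)/γ` a
subgradient of `f` at `p`: comparing `p` with `p + t(y - p)` and letting `t → 0⁺` gives
`f y ≥ f p + ⟪w - p, y - p⟫/γ`. At `y = x` this reads
`f x ≥ f p + ‖x - p‖²/γ + ⟪x*, x - p⟫`, and adding the trivial half of Fenchel–Young,
`f* x* ≥ ⟪p, x*⟫ - f p`, yields the inequality.
-/

open Filter Topology

theorem EReal.exists_eq_coe {x : EReal} (hx : x ≠ ⊤) (hx' : x ≠ ⊥) : ∃ a : ℝ, x = a :=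
  ⟨x.toReal, (EReal.coe_toReal hx hx').symm⟩

theorem ne_top_of_forall_add_le {X : Type*} {f : X → EReal} {g : X → ℝ} {q z : X}
    (hmin : ∀ y, f q + (g q : EReal) ≤ f y + (g y : EReal)) (hz : f z ≠ ⊤) : f q ≠ ⊤ := by
  intro hq
  have h := hmin z
  rw [hq, EReal.top_add_coe, top_le_iff] at h
  exact EReal.add_ne_top hz (EReal.coe_ne_top _) h

section

variable {X : Type*} [NormedAddCommGroup X] [InnerProductSpace ℝ X]

theorem coe_inner_sub_le_conj (f : X → EReal) (z v : X) :
    ((⟪z, v⟫ : ℝ) : EReal) - f z ≤ conj f v :=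
  le_iSup (fun z : X => ((⟪z, v⟫ : ℝ) : EReal) - f z) z

theorem norm_add_smul_sq (u v : X) (t : ℝ) :
    ‖u + t • v‖ ^ 2 = ‖u‖ ^ 2 + 2 * t * ⟪u, v⟫ + t ^ 2 * ‖v‖ ^ 2 := by
  rw [norm_add_sq_real, real_inner_smul_right, norm_smul, mul_pow, Real.norm_eq_abs, sq_abs]
  ring

/-- `h` compares `q` with the point `t • y + (1 - t) • q` of the segment, after convexity of `f`
has bounded `f` there by `t * b + (1 - t) * a`. -/
theorem add_inner_div_le_of_prox_le_segment {γ t a b : ℝ} (hγ : 0 < γ) (ht : 0 < t)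
    {w q y : X}
    (h : a + ‖q - w‖ ^ 2 / (2 * γ)
      ≤ t * b + (1 - t) * a + ‖t • y + (1 - t) • q - w‖ ^ 2 / (2 * γ)) :
    a + ⟪w - q, y - q⟫ / γ ≤ b + t * (‖y - q‖ ^ 2 / (2 * γ)) := by
  have hseg : t • y + (1 - t) • q - w = (q - w) + t • (y - q) := by
    rw [smul_sub, sub_smul, one_smul]; abel
  have hswap : ⟪w - q, y - q⟫ = -⟪q - w, y - q⟫ := by
    rw [← inner_neg_left, neg_sub]
  rw [hseg, norm_add_smul_sq] at h
  rw [hswap, ← mul_le_mul_iff_right₀ ht]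
  field_simp at h ⊢
  nlinarith

theorem le_of_forall_le_add_mul {c b B : ℝ}
    (h : ∀ t : ℝ, 0 < t → t ≤ 1 → c ≤ b + t * B) : c ≤ b := by
  have hlim : Tendsto (fun t : ℝ => b + t * B) (𝓝[>] 0) (𝓝 b) :=
    tendsto_nhdsWithin_of_tendsto_nhds <|
      (continuous_const.add (continuous_id.mul continuous_const)).tendsto' 0 b (by simp)
  refine ge_of_tendsto hlim ?_
  filter_upwards [Ioo_mem_nhdsGT one_pos] with t ht
  exact h t ht.1 ht.2.le

theorem subgradient_ineq_of_prox {f : X → EReal} (hbot : ∀ z, f z ≠ ⊥)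
    (hconv : ∀ u v : X, ∀ a b : ℝ, 0 ≤ a → 0 ≤ b → a + b = 1 →
      f (a • u + b • v) ≤ (a : EReal) * f u + (b : EReal) * f v)
    {γ : ℝ} (hγ : 0 < γ) {w q : X}
    (hmin : ∀ y, f q + ((‖q - w‖ ^ 2 / (2 * γ) : ℝ) : EReal)
      ≤ f y + ((‖y - w‖ ^ 2 / (2 * γ) : ℝ) : EReal))
    {a : ℝ} (ha : f q = a) (y : X) :
    ((a + ⟪w - q, y - q⟫ / γ : ℝ) : EReal) ≤ f y := by
  rcases eq_or_ne (f y) ⊤ with hy | hy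
  · rw [hy]; exact le_top
  obtain ⟨b, hb⟩ := EReal.exists_eq_coe hy (hbot y)
  rw [hb, EReal.coe_le_coe_iff]
  refine le_of_forall_le_add_mul fun t ht ht1 => add_inner_div_le_of_prox_le_segment hγ ht ?_
  have hcomb := hconv y q t (1 - t) ht.le (by linarith) (by ring)
  rw [ha, hb] at hcomb
  have h := (hmin (t • y + (1 - t) • q)).trans (add_le_add_left hcomb _)
  rw [ha] at h
  exact_mod_cast h

end

theorem stmt_9_general {X : Type*} [NormedAddCommGroup X] [InnerProductSpace ℝ X]
    (f : X → EReal) (hf : IsProperConvexLsc f) (x xs : X) (γ : ℝ) (hγ : 0 < γ)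
    (P : X → X) (hP : IsProx f γ P) :
    f x + conj f xs - ((⟪x, xs⟫ : ℝ) : EReal)
      ≥ ((‖x - P (x + γ • xs)‖ ^ 2 / γ : ℝ) : EReal) := by
  obtain ⟨hbot, ⟨z, hz⟩, -, hconv⟩ := hf
  set w := x + γ • xs
  set p := P w
  have hmin := (hP w).1
  have hp : f p ≠ ⊤ := ne_top_of_forall_add_le (g := fun y => ‖y - w‖ ^ 2 / (2 * γ)) hmin hz
  obtain ⟨a, ha⟩ := EReal.exists_eq_coe hp (hbot p)
  have hfx := subgradient_ineq_of_prox hbot hconv hγ hmin ha x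
  have hconj := coe_inner_sub_le_conj f p xs
  rw [ha, ← EReal.coe_sub] at hconj
  have hinner : ⟪w - p, x - p⟫ = ‖x - p‖ ^ 2 + γ * ⟪x, xs⟫ - γ * ⟪p, xs⟫ := by
    rw [show w - p = (x - p) + γ • xs by simp only [w]; abel, inner_add_left,
      real_inner_smul_left, real_inner_self_eq_norm_sq, real_inner_comm, inner_sub_left]
    ring
  calc ((‖x - p‖ ^ 2 / γ : ℝ) : EReal)
      = (((a + ⟪w - p, x - p⟫ / γ) + (⟪p, xs⟫ - a) - ⟪x, xs⟫ : ℝ) : EReal) := by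
        rw [hinner]; field_simp; ring_nf
    _ ≤ f x + conj f xs - ((⟪x, xs⟫ : ℝ) : EReal) := by
        rw [EReal.coe_sub, EReal.coe_add]
        exact EReal.sub_le_sub (add_le_add hfx hconj) le_rfl

theorem stmt_9 {X : Type*} [NormedAddCommGroup X] [InnerProductSpace ℝ X] [CompleteSpace X]
    (f : X → EReal) (hf : IsProperConvexLsc f) (x xs : X) (γ : ℝ) (hγ : 0 < γ)
    (P : X → X) (hP : IsProx f γ P) :
    f x + conj f xs - ((⟪x, xs⟫ : ℝ) : EReal)
      ≥ ((‖x - P (x + γ • xs)‖ ^ 2 / γ : ℝ) : EReal) :=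
  stmt_9_general f hf x xs γ hγ P hP
end

section
/- Let X be a real Hilbert space, let f : X → ℝ∪{+∞} be convex, lower semicontinuous, and proper, let x, x* ∈ X, and let γ > 0. Then equality f(x) + f*(x*) − ⟨x, x*⟩ = ‖x − Prox_{γf}(x + γx*)‖²/γ holds if and only if Prox_{γf}(x + γx*) ∈ ∂f*(x*) and x + γx* − Prox_{γf}(x + γx*) ∈ γ·∂f(x). -/
open scoped RealInnerProductSpace Pointwise

/-! Put `p = Prox_{γf}(x + γx*)` and `w = (x + γx* − p)/γ`. Minimality of `p` gives `w ∈ ∂f(p)`,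
i.e. `f(p) + f*(w) = ⟨p, w⟩`, and then
`f(x) + f*(x*) − ⟨x, x*⟩ = ⟨x − p, w − x*⟩ + [f(x) + f*(w) − ⟨x, w⟩] + [f(p) + f*(x*) − ⟨p, x*⟩]`
with `⟨x − p, w − x*⟩ = ‖x − p‖²/γ`. Both brackets are nonnegative Fenchel–Young gaps, so equality
holds iff both vanish, i.e. `w ∈ ∂f(x)` and `x* ∈ ∂f(p)`. The latter is equivalent to
`p ∈ ∂f*(x*)` by testing the subgradient inequality of `f*` at `w`, so no biconjugation is needed. -/

open Set Filter Topology

lemma nonneg_of_forall_mem_Ioo_nonneg_add_mul {a C : ℝ}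
    (h : ∀ t ∈ Ioo (0 : ℝ) 1, 0 ≤ a + t * C) : 0 ≤ a := by
  have hlim : Tendsto (fun t : ℝ => a + t * C) (𝓝[>] 0) (𝓝 a) := by
    have : Continuous fun t : ℝ => a + t * C := by fun_prop
    simpa using (this.tendsto 0).mono_left nhdsWithin_le_nhds
  exact ge_of_tendsto hlim (eventually_of_mem (Ioo_mem_nhdsGT one_pos) h)

def IsProper {α : Type*} (f : α → EReal) : Prop :=
  (∀ z, f z ≠ ⊥) ∧ ∃ z, f z ≠ ⊤

lemma IsProper.exists_eq_coe {α : Type*} {f : α → EReal} (hf : IsProper f) {u : α}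
    (hu : f u ≠ ⊤) : ∃ r : ℝ, f u = r :=
  ⟨_, (EReal.coe_toReal hu (hf.1 u)).symm⟩

section

variable {X : Type*} [NormedAddCommGroup X] [InnerProductSpace ℝ X] {f : X → EReal}

def IsConvex (f : X → EReal) : Prop :=
  ∀ u v : X, ∀ a b : ℝ, 0 ≤ a → 0 ≤ b → a + b = 1 →
    f (a • u + b • v) ≤ (a : EReal) * f u + (b : EReal) * f v

lemma IsProperConvexLsc.isProper (hf : IsProperConvexLsc f) : IsProper f := ⟨hf.1, hf.2.1⟩

lemma IsProperConvexLsc.isConvex (hf : IsProperConvexLsc f) : IsConvex f := hf.2.2.2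

lemma inner_sub_le_conj (f : X → EReal) (u v : X) : ((⟪u, v⟫ : ℝ) : EReal) - f u ≤ conj f v :=
  le_iSup (fun z => ((⟪z, v⟫ : ℝ) : EReal) - f z) u

lemma conj_ne_bot (hf : IsProper f) (v : X) : conj f v ≠ ⊥ := by
  obtain ⟨u, hu⟩ := hf.2
  obtain ⟨r, hr⟩ := hf.exists_eq_coe hu
  refine ne_bot_of_le_ne_bot ?_ (inner_sub_le_conj f u v)
  rw [hr, ← EReal.coe_sub]
  exact EReal.coe_ne_bot _

theorem inner_le_add_conj (hf : IsProper f) (u v : X) :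
    ((⟪u, v⟫ : ℝ) : EReal) ≤ f u + conj f v := by
  rw [add_comm, ← EReal.sub_le_iff_le_add (.inl (hf.1 u)) (.inr (conj_ne_bot hf v))]
  exact inner_sub_le_conj f u v

theorem mem_subdiff_iff_conj_eq {u v : X} {r : ℝ} (hu : f u = r) :
    v ∈ subdiff f u ↔ conj f v = ((⟪u, v⟫ - r : ℝ) : EReal) := by
  refine ⟨fun hv => le_antisymm (iSup_le fun z => ?_) ?_, fun hc y => ?_⟩
  · refine EReal.sub_le_of_le_add ?_
    calc ((⟪z, v⟫ : ℝ) : EReal) = ((⟪u, v⟫ - r : ℝ) : EReal) + ((r + ⟪z - u, v⟫ : ℝ) : EReal) := by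
          norm_cast; rw [inner_sub_left]; ring
      _ ≤ ((⟪u, v⟫ - r : ℝ) : EReal) + f z := by
          gcongr; rw [EReal.coe_add, ← hu]; exact hv z
  · simpa [hu] using inner_sub_le_conj f u v
  · have h := inner_sub_le_conj f y v
    rw [hc, EReal.sub_le_iff_le_add (.inr (EReal.coe_ne_top _)) (.inr (EReal.coe_ne_bot _))] at h
    calc f u + ((⟪y - u, v⟫ : ℝ) : EReal) = ((⟪y, v⟫ : ℝ) : EReal) - ((⟪u, v⟫ - r : ℝ) : EReal) := by
          rw [hu]; norm_cast; rw [inner_sub_left]; ring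
      _ ≤ f y := EReal.sub_le_of_le_add' h

lemma mem_subdiff_conj_iff {u v w : X} {r : ℝ} (hu : f u = r) (hw : w ∈ subdiff f u) :
    u ∈ subdiff (conj f) v ↔ v ∈ subdiff f u := by
  rw [mem_subdiff_iff_conj_eq hu]
  constructor
  · intro h
    refine le_antisymm ?_ (by simpa [hu] using inner_sub_le_conj f u v)
    have hwv := h w
    rw [(mem_subdiff_iff_conj_eq hu).1 hw, ← EReal.le_sub_iff_add_le (.inl (EReal.coe_ne_bot _))
      (.inl (EReal.coe_ne_top _))] at hwv
    refine hwv.trans_eq ?_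
    norm_cast; rw [inner_sub_left, real_inner_comm u w, real_inner_comm u v]; ring
  · intro hc y
    calc conj f v + ((⟪y - v, u⟫ : ℝ) : EReal) = ((⟪u, y⟫ - r : ℝ) : EReal) := by
          rw [hc]; norm_cast; rw [inner_sub_left, real_inner_comm u y, real_inner_comm u v]; ring
      _ ≤ conj f y := by simpa [hu] using inner_sub_le_conj f u y

lemma IsProper.ne_top_of_mem_subdiff (hf : IsProper f) {u v : X} (hv : v ∈ subdiff f u) :
    f u ≠ ⊤ := by
  obtain ⟨y, hy⟩ := hf.2
  intro hu
  have := hv y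
  rw [hu, EReal.top_add_coe, top_le_iff] at this
  exact hy this

theorem add_conj_sub_inner_eq_iff (hf : IsProper f) {p w : X} {b : ℝ} (hb : f p = b)
    (hw : w ∈ subdiff f p) (x v : X) :
    f x + conj f v - ((⟪x, v⟫ : ℝ) : EReal) = ((⟪x - p, w - v⟫ : ℝ) : EReal) ↔
      w ∈ subdiff f x ∧ v ∈ subdiff f p := by
  by_cases hx : f x = ⊤
  · refine iff_of_false ?_ fun h => hf.ne_top_of_mem_subdiff h.1 hx
    rw [hx, EReal.top_add_of_ne_bot (conj_ne_bot hf v), EReal.top_sub_coe]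
    exact EReal.top_ne_coe _
  by_cases hv : conj f v = ⊤
  · refine iff_of_false ?_ fun h => EReal.coe_ne_top _ ((mem_subdiff_iff_conj_eq hb).1 h.2 ▸ hv)
    rw [hv, EReal.add_top_of_ne_bot (hf.1 x), EReal.top_sub_coe]
    exact EReal.top_ne_coe _
  obtain ⟨a, ha⟩ := hf.exists_eq_coe hx
  obtain ⟨c, hc⟩ : ∃ c : ℝ, conj f v = c := ⟨_, (EReal.coe_toReal hv (conj_ne_bot hf v)).symm⟩
  have hcw := (mem_subdiff_iff_conj_eq hb).1 hw
  have young_xw := inner_le_add_conj hf x w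
  have young_pv := inner_le_add_conj hf p v
  rw [ha, hcw] at young_xw
  rw [hb, hc] at young_pv
  rw [mem_subdiff_iff_conj_eq ha, mem_subdiff_iff_conj_eq hb, ha, hc, hcw]
  norm_cast at young_xw young_pv ⊢
  have hcross : ⟪x - p, w - v⟫ = ⟪x, w⟫ - ⟪x, v⟫ - ⟪p, w⟫ + ⟪p, v⟫ := by
    simp only [inner_sub_left, inner_sub_right]; ring
  rw [hcross]
  constructor
  · intro h
    constructor <;> linarith
  · rintro ⟨h1, h2⟩
    linarith

namespace IsProx

variable {γ : ℝ} {P : X → X}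

lemma ne_top (hf : IsProper f) (hP : IsProx f γ P) (z : X) : f (P z) ≠ ⊤ := by
  obtain ⟨y, hy⟩ := hf.2
  obtain ⟨s, hs⟩ := hf.exists_eq_coe hy
  intro hPz
  have := (hP z).1 y
  rw [hPz, hs, EReal.top_add_coe, top_le_iff, ← EReal.coe_add] at this
  exact EReal.coe_ne_top _ this

lemma add_inner_le (hconv : IsConvex f) (hγ : 0 < γ) (hP : IsProx f γ P) (z : X) {y : X}
    {b s : ℝ} (hb : f (P z) = b) (hs : f y = s) :
    b + ⟪y - P z, γ⁻¹ • (z - P z)⟫ ≤ s := by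
  set p := P z
  rw [real_inner_smul_right]
  suffices h : ∀ t ∈ Ioo (0 : ℝ) 1,
      0 ≤ (s - b - γ⁻¹ * ⟪y - p, z - p⟫) + t * (‖y - p‖ ^ 2 / (2 * γ)) by
    linarith [nonneg_of_forall_mem_Ioo_nonneg_add_mul h]
  rintro t ⟨ht0, ht1⟩
  have hmin := (hP z).1 (p + t • (y - p))
  have hconv_t := hconv p y (1 - t) t (by linarith) ht0.le (by ring)
  rw [show (1 - t) • p + t • y = p + t • (y - p) by module, hb, hs] at hconv_t
  have hmin_t : b + ‖p - z‖ ^ 2 / (2 * γ)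
      ≤ (1 - t) * b + t * s + ‖p + t • (y - p) - z‖ ^ 2 / (2 * γ) := by
    have := hmin.trans (add_le_add_left hconv_t _)
    rw [hb] at this
    exact_mod_cast this
  have hnorm : ‖p + t • (y - p) - z‖ ^ 2
      = ‖p - z‖ ^ 2 - 2 * t * ⟪y - p, z - p⟫ + t ^ 2 * ‖y - p‖ ^ 2 := by
    rw [show p + t • (y - p) - z = (p - z) + t • (y - p) by abel, norm_add_sq_real,
      inner_smul_right, norm_smul, mul_pow, Real.norm_eq_abs, sq_abs, real_inner_comm,
      ← neg_sub z p, inner_neg_right]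
    ring
  rw [hnorm] at hmin_t
  refine nonneg_of_mul_nonneg_right ?_ ht0
  calc (0 : ℝ) ≤ (1 - t) * b + t * s
        + (‖p - z‖ ^ 2 - 2 * t * ⟪y - p, z - p⟫ + t ^ 2 * ‖y - p‖ ^ 2) / (2 * γ)
        - (b + ‖p - z‖ ^ 2 / (2 * γ)) := sub_nonneg.2 hmin_t
    _ = t * ((s - b - γ⁻¹ * ⟪y - p, z - p⟫) + t * (‖y - p‖ ^ 2 / (2 * γ))) := by
        field_simp
        ring

lemma inv_smul_sub_mem_subdiff (hf : IsProper f) (hconv : IsConvex f) (hγ : 0 < γ)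
    (hP : IsProx f γ P) (z : X) : γ⁻¹ • (z - P z) ∈ subdiff f (P z) := by
  intro y
  obtain ⟨b, hb⟩ := hf.exists_eq_coe (hP.ne_top hf z)
  rcases eq_or_ne (f y) ⊤ with hy | hy
  · rw [hy]
    exact le_top
  obtain ⟨s, hs⟩ := hf.exists_eq_coe hy
  rw [hb, hs]
  exact_mod_cast hP.add_inner_le hconv hγ z hb hs

end IsProx

end

theorem stmt_10_general {X : Type*} [NormedAddCommGroup X] [InnerProductSpace ℝ X]
    (f : X → EReal) (hf : IsProperConvexLsc f) (x xs : X) (γ : ℝ) (hγ : 0 < γ)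
    (P : X → X) (hP : IsProx f γ P) :
    f x + conj f xs - ((⟪x, xs⟫ : ℝ) : EReal)
        = ((‖x - P (x + γ • xs)‖ ^ 2 / γ : ℝ) : EReal)
      ↔ P (x + γ • xs) ∈ subdiff (conj f) xs ∧
        x + γ • xs - P (x + γ • xs) ∈ γ • subdiff f x := by
  set p := P (x + γ • xs)
  have hw : γ⁻¹ • (x + γ • xs - p) ∈ subdiff f p :=
    hP.inv_smul_sub_mem_subdiff hf.isProper hf.isConvex hγ _
  obtain ⟨b, hb⟩ := hf.isProper.exists_eq_coe (hP.ne_top hf.isProper (x + γ • xs))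
  have hcross : ⟪x - p, γ⁻¹ • (x + γ • xs - p) - xs⟫ = ‖x - p‖ ^ 2 / γ := by
    rw [show γ⁻¹ • (x + γ • xs - p) - xs = γ⁻¹ • (x - p) by
      rw [smul_sub, smul_add, inv_smul_smul₀ hγ.ne', smul_sub]; abel]
    rw [real_inner_smul_right, real_inner_self_eq_norm_sq, inv_mul_eq_div]
  rw [← hcross, add_conj_sub_inner_eq_iff hf.isProper hb hw, mem_subdiff_conj_iff hb hw,
    Set.mem_smul_set_iff_inv_smul_mem₀ hγ.ne']
  exact and_comm

theorem stmt_10 {X : Type*} [NormedAddCommGroup X] [InnerProductSpace ℝ X] [CompleteSpace X]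
    (f : X → EReal) (hf : IsProperConvexLsc f) (x xs : X) (γ : ℝ) (hγ : 0 < γ)
    (P : X → X) (hP : IsProx f γ P) :
    f x + conj f xs - ((⟪x, xs⟫ : ℝ) : EReal)
        = ((‖x - P (x + γ • xs)‖ ^ 2 / γ : ℝ) : EReal)
      ↔ P (x + γ • xs) ∈ subdiff (conj f) xs ∧
        x + γ • xs - P (x + γ • xs) ∈ γ • subdiff f x :=
  stmt_10_general f hf x xs γ hγ P hP
end

section
/- (Duality for the Carlier bound) Let X be a real Hilbert space, let A : X ⇉ X be maximally monotone, let x, x* ∈ X, and let γ > 0. Then C_{A,γ}(x, x*) = C_{A^{−1},γ^{−1}}(x*, x), i.e. ‖x − J_{γA}(x + γx*)‖²/γ = ‖x* − J_{γ^{−1}A^{−1}}(x* + γ^{−1}x)‖²/γ^{−1}. -/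
open scoped RealInnerProductSpace

/-- The inverse of a set-valued operator: u is in (invOp A) v iff v is in A u. -/
def invOp {X : Type*} (A : X → Set X) : X → Set X := fun v => {u | v ∈ A u}

theorem stmt_11 {X : Type*} [NormedAddCommGroup X] [InnerProductSpace ℝ X] [CompleteSpace X]
    (A : X → Set X) (hA : IsMaxMonotone A) (x xs : X) (γ : ℝ) (hγ : 0 < γ)
    (J J' : X → X) (hJ : IsResolvent A γ J) (hJ' : IsResolvent (invOp A) γ⁻¹ J') :
    ‖x - J (x + γ • xs)‖ ^ 2 / γ = ‖xs - J' (xs + γ⁻¹ • x)‖ ^ 2 / γ⁻¹ := by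
  have hγ0 : γ ≠ 0 := ne_of_gt hγ
  set p := J (x + γ • xs) with hpdef
  have hp : γ⁻¹ • (x + γ • xs - p) ∈ A p := (hJ _ p).mp rfl
  have hpeq : γ⁻¹ • (x + γ • xs - p) = xs + γ⁻¹ • (x - p) := by
    rw [smul_sub, smul_add, smul_smul, inv_mul_cancel₀ hγ0, one_smul, smul_sub]
    abel
  have hq : J' (xs + γ⁻¹ • x) = xs + γ⁻¹ • (x - p) := by
    rw [hJ']
    have : (γ⁻¹)⁻¹ • (xs + γ⁻¹ • x - (xs + γ⁻¹ • (x - p))) = p := by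
      rw [inv_inv]
      have h2 : xs + γ⁻¹ • x - (xs + γ⁻¹ • (x - p)) = γ⁻¹ • p := by
        rw [smul_sub]; abel
      rw [h2, smul_smul, mul_inv_cancel₀ hγ0, one_smul]
    rw [this]
    show xs + γ⁻¹ • (x - p) ∈ A p
    rw [← hpeq]; exact hp
  rw [hq]
  have h3 : xs - (xs + γ⁻¹ • (x - p)) = γ⁻¹ • (p - x) := by
    rw [smul_sub, smul_sub]; abel
  rw [h3, norm_smul, norm_sub_rev]
  have : ‖γ⁻¹‖ = γ⁻¹ := abs_of_pos (inv_pos.mpr hγ)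
  rw [this]
  field_simp
end

section
/- Let X be a real Hilbert space, let A : X ⇉ X be maximally monotone, and let x, x* ∈ X. If x ∈ dom A, then C_{A,γ}(x,x*) = ‖x − J_{γA}(x + γx*)‖²/γ tends to 0 as γ → 0⁺. -/
/-!
If `p = J_{γA}(x + γx*)` then `x* + (x - p)/γ ∈ A p`; testing monotonicity against a fixed
`a ∈ A x` gives `‖x - p‖²/γ ≤ ⟪x - p, a - x*⟫`, hence `‖x - p‖ ≤ γ‖a - x*‖` and the Carlier
bound is at most `γ‖a - x*‖²`, which tends to `0`.
-/

open scoped RealInnerProductSpace Topology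

section

variable {X : Type*} [NormedAddCommGroup X] [InnerProductSpace ℝ X]

def IsMonotoneOp (A : X → Set X) : Prop :=
  ∀ a as b bs, as ∈ A a → bs ∈ A b → 0 ≤ ⟪a - b, as - bs⟫

theorem IsMaxMonotone.isMonotoneOp {A : X → Set X} (hA : IsMaxMonotone A) : IsMonotoneOp A :=
  hA.1

theorem IsResolvent.smul_sub_mem {A : X → Set X} {γ : ℝ} {J : X → X}
    (hJ : IsResolvent A γ J) (z : X) : γ⁻¹ • (z - J z) ∈ A (J z) :=
  (hJ z (J z)).mp rfl

theorem IsMonotoneOp.norm_sub_resolvent_le {A : X → Set X} (hA : IsMonotoneOp A)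
    {γ : ℝ} {J : X → X} (hJ : IsResolvent A γ J) (hγ : 0 < γ)
    {x a : X} (ha : a ∈ A x) (xs : X) :
    ‖x - J (x + γ • xs)‖ ≤ γ * ‖a - xs‖ := by
  set d := x - J (x + γ • xs)
  have hmem : γ⁻¹ • d + xs ∈ A (J (x + γ • xs)) := by
    convert hJ.smul_sub_mem (x + γ • xs) using 1
    rw [show x + γ • xs - J (x + γ • xs) = d + γ • xs by simp only [d]; abel, smul_add,
      smul_smul, inv_mul_cancel₀ hγ.ne', one_smul]
  have hinner : γ⁻¹ * ‖d‖ ^ 2 ≤ ⟪d, a - xs⟫ := by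
    have := hA x a _ _ ha hmem
    rw [show a - (γ⁻¹ • d + xs) = (a - xs) - γ⁻¹ • d by abel, inner_sub_right,
      real_inner_smul_right, real_inner_self_eq_norm_sq] at this
    linarith
  have hsq : ‖d‖ * ‖d‖ ≤ ‖d‖ * (γ * ‖a - xs‖) := by
    have := hinner.trans (real_inner_le_norm d (a - xs))
    rw [inv_mul_le_iff₀ hγ] at this
    linarith
  rcases (norm_nonneg d).eq_or_lt with hd | hd
  · rw [← hd]; positivity
  · exact le_of_mul_le_mul_left hsq hd

theorem IsMonotoneOp.norm_sub_resolvent_sq_div_le {A : X → Set X} (hA : IsMonotoneOp A)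
    {γ : ℝ} {J : X → X} (hJ : IsResolvent A γ J) (hγ : 0 < γ)
    {x a : X} (ha : a ∈ A x) (xs : X) :
    ‖x - J (x + γ • xs)‖ ^ 2 / γ ≤ γ * ‖a - xs‖ ^ 2 := by
  rw [div_le_iff₀ hγ]
  calc ‖x - J (x + γ • xs)‖ ^ 2 ≤ (γ * ‖a - xs‖) ^ 2 := by
        gcongr; exact hA.norm_sub_resolvent_le hJ hγ ha xs
    _ = γ * ‖a - xs‖ ^ 2 * γ := by ring

end

theorem stmt_13_general {X : Type*} [NormedAddCommGroup X] [InnerProductSpace ℝ X]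
    (A : X → Set X) (hA : IsMaxMonotone A) (x xs : X)
    (J : ℝ → X → X) (hJ : ∀ γ : ℝ, 0 < γ → IsResolvent A γ (J γ))
    (hx : (A x).Nonempty) :
    Filter.Tendsto (fun γ : ℝ => ‖x - J γ (x + γ • xs)‖ ^ 2 / γ)
      (𝓝[>] 0) (𝓝 0) := by
  obtain ⟨a, ha⟩ := hx
  have hbound : Filter.Tendsto (fun γ : ℝ => γ * ‖a - xs‖ ^ 2) (𝓝[>] 0) (𝓝 0) := by
    simpa using ((continuous_mul_const (‖a - xs‖ ^ 2)).tendsto 0).mono_left nhdsWithin_le_nhds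
  refine squeeze_zero' ?_ ?_ hbound
  all_goals filter_upwards [self_mem_nhdsWithin] with γ (hγ : 0 < γ)
  · positivity
  · exact hA.isMonotoneOp.norm_sub_resolvent_sq_div_le (hJ γ hγ) hγ ha xs

theorem stmt_13 {X : Type*} [NormedAddCommGroup X] [InnerProductSpace ℝ X] [CompleteSpace X]
    (A : X → Set X) (hA : IsMaxMonotone A) (x xs : X)
    (J : ℝ → X → X) (hJ : ∀ γ : ℝ, 0 < γ → IsResolvent A γ (J γ))
    (hx : (A x).Nonempty) :
    Filter.Tendsto (fun γ : ℝ => ‖x - J γ (x + γ • xs)‖ ^ 2 / γ)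
      (𝓝[>] 0) (𝓝 0) :=
  stmt_13_general A hA x xs J hJ hx
end

section
/- Let X be a real Hilbert space, let A : X ⇉ X be maximally monotone, and let x, x* ∈ X. If x* does not belong to the closure of ran A, then C_{A,γ}(x,x*) = ‖x − J_{γA}(x + γx*)‖²/γ tends to +∞ as γ → +∞; and if x* ∈ ran A, then C_{A,γ}(x,x*) tends to 0 as γ → +∞. -/
open scoped RealInnerProductSpace Topology

theorem stmt_14 {X : Type*} [NormedAddCommGroup X] [InnerProductSpace ℝ X] [CompleteSpace X]
    (A : X → Set X) (hA : IsMaxMonotone A) (x xs : X)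
    (J : ℝ → X → X) (hJ : ∀ γ : ℝ, 0 < γ → IsResolvent A γ (J γ)) :
    (xs ∉ closure {v : X | ∃ z, v ∈ A z} →
      Filter.Tendsto (fun γ : ℝ => ‖x - J γ (x + γ • xs)‖ ^ 2 / γ)
        Filter.atTop Filter.atTop) ∧
    ((∃ z, xs ∈ A z) →
      Filter.Tendsto (fun γ : ℝ => ‖x - J γ (x + γ • xs)‖ ^ 2 / γ)
        Filter.atTop (𝓝 0)) := by
  -- common facts
  have hmem : ∀ γ : ℝ, 0 < γ →
      γ⁻¹ • (x + γ • xs - J γ (x + γ • xs)) ∈ A (J γ (x + γ • xs)) := by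
    intro γ hγ
    exact ((hJ γ hγ) (x + γ • xs) (J γ (x + γ • xs))).mp rfl
  have hkey : ∀ γ : ℝ, 0 < γ →
      γ⁻¹ • (x + γ • xs - J γ (x + γ • xs)) - xs = γ⁻¹ • (x - J γ (x + γ • xs)) := by
    intro γ hγ
    rw [smul_sub, smul_add, smul_smul, inv_mul_cancel₀ hγ.ne', one_smul, smul_sub]
    abel
  constructor
  · intro h
    obtain ⟨ε, εpos, hsub⟩ :=
      Metric.isOpen_iff.mp isClosed_closure.isOpen_compl xs h
    refine Filter.tendsto_atTop_mono' Filter.atTop ?_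
      (Filter.tendsto_id.const_mul_atTop (by positivity : (0:ℝ) < ε ^ 2))
    filter_upwards [Filter.eventually_gt_atTop 0] with γ hγ
    set p := J γ (x + γ • xs) with hp
    set u := γ⁻¹ • (x + γ • xs - p) with hu
    have huA : u ∈ A p := hmem γ hγ
    have huS : u ∈ closure {v : X | ∃ z, v ∈ A z} :=
      subset_closure ⟨p, huA⟩
    have hdist : ε ≤ dist u xs := by
      by_contra hc
      exact hsub (Metric.mem_ball.mpr (lt_of_not_ge hc)) huS
    have hnorm : dist u xs = γ⁻¹ * ‖x - p‖ := by
      rw [dist_eq_norm, hkey γ hγ, norm_smul, Real.norm_eq_abs,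
        abs_of_pos (inv_pos.mpr hγ)]
    rw [hnorm] at hdist
    have h1 : ε * γ ≤ ‖x - p‖ := by
      have h' := mul_le_mul_of_nonneg_right hdist hγ.le
      rwa [mul_comm γ⁻¹, mul_assoc, inv_mul_cancel₀ hγ.ne', mul_one] at h'
    have h2 : (ε * γ) ^ 2 ≤ ‖x - p‖ ^ 2 :=
      pow_le_pow_left₀ (by positivity) h1 2
    simp only [id]
    rw [le_div_iff₀ hγ]
    nlinarith
  · rintro ⟨z, hz⟩
    apply tendsto_of_tendsto_of_tendsto_of_le_of_le'
      (g := fun _ : ℝ => (0:ℝ)) (h := fun γ : ℝ => ‖x - z‖ ^ 2 / γ)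
    · exact tendsto_const_nhds
    · exact Filter.Tendsto.div_atTop tendsto_const_nhds Filter.tendsto_id
    · filter_upwards [Filter.eventually_gt_atTop 0] with γ hγ
      positivity
    · filter_upwards [Filter.eventually_gt_atTop 0] with γ hγ
      set p := J γ (x + γ • xs) with hp
      set u := γ⁻¹ • (x + γ • xs - p) with hu
      have huA : u ∈ A p := hmem γ hγ
      have hmono : 0 ≤ ⟪p - z, u - xs⟫ := hA.1 p u z xs huA hz
      rw [hkey γ hγ, real_inner_smul_right] at hmono
      have hip : 0 ≤ ⟪p - z, x - p⟫ := by
        nlinarith [inv_pos.mpr hγ, mul_pos (inv_pos.mpr hγ) (inv_pos.mpr hγ)]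
      have hsplit : x - z = (x - p) + (p - z) := by abel
      have hexp : ⟪x - z, x - p⟫ = ‖x - p‖ ^ 2 + ⟪p - z, x - p⟫ := by
        rw [hsplit, inner_add_left, real_inner_self_eq_norm_sq]
      have hcs : ⟪x - z, x - p⟫ ≤ ‖x - z‖ * ‖x - p‖ := real_inner_le_norm _ _
      have hle : ‖x - p‖ ^ 2 ≤ ‖x - z‖ * ‖x - p‖ := by linarith
      have hfin : ‖x - p‖ ^ 2 ≤ ‖x - z‖ ^ 2 := by
        nlinarith [norm_nonneg (x - p), norm_nonneg (x - z)]
      gcongr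
end

section
/- Let X be a real Hilbert space and let A : X ⇉ X be maximally monotone. If (x, x*) ∈ X × X satisfies sup_{γ>0} C_{A,γ}(x,x*) < +∞, then x belongs to the closure of dom A and x* belongs to the closure of ran A; that is, dom sup_{γ>0} C_{A,γ} ⊆ closure(dom A) × closure(ran A). -/
/-!
Write `p γ = J_{γA}(x + γ x*)`, so that `x* + γ⁻¹ (x - p γ) ∈ A (p γ)`. A finite bound `M` on
the Carlier bound says `‖x - p γ‖ ≤ √(M γ)`. Letting `γ → 0⁺` gives `p γ → x` with `p γ ∈ dom A`;
letting `γ → ∞` gives `‖γ⁻¹ (x - p γ)‖ ≤ √(M / γ) → 0`, so elements of `ran A` converge to `x*`.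
-/

open scoped RealInnerProductSpace

open Filter Topology

theorem IsResolvent.inv_smul_sub_mem {X : Type*} [NormedAddCommGroup X] [InnerProductSpace ℝ X]
    {A : X → Set X} {γ : ℝ} {J : X → X} (hJ : IsResolvent A γ J) (z : X) :
    γ⁻¹ • (z - J z) ∈ A (J z) :=
  (hJ z (J z)).mp rfl

theorem exists_le_of_iSup₂_coe_lt_top {ι : Type*} {P : ι → Prop} {f : ι → ℝ}
    (h : (⨆ (i : ι) (_ : P i), (f i : EReal)) < ⊤) : ∃ M : ℝ, ∀ i, P i → f i ≤ M :=
  ⟨_, fun i hi => EReal.coe_le_coe_iff.mp <|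
    (le_iSup₂ (f := fun i (_ : P i) => (f i : EReal)) i hi).trans (EReal.le_coe_toReal h.ne)⟩

theorem tendsto_nhdsGT_zero_of_sq_norm_sub_le {E : Type*} [SeminormedAddCommGroup E] {x : E}
    {p : ℝ → E} {M : ℝ} (h : ∀ γ, 0 < γ → ‖x - p γ‖ ^ 2 ≤ M * γ) :
    Tendsto p (𝓝[>] 0) (𝓝 x) := by
  rw [tendsto_iff_norm_sub_tendsto_zero]
  have hsqrt : Tendsto (fun γ : ℝ => √(M * γ)) (𝓝[>] 0) (𝓝 0) := by
    simpa using ((continuous_const.mul continuous_id).sqrt.tendsto 0).mono_left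
      nhdsWithin_le_nhds
  refine squeeze_zero_norm' ?_ hsqrt
  filter_upwards [self_mem_nhdsWithin] with γ hγ
  rw [norm_norm, norm_sub_rev]
  exact Real.le_sqrt_of_sq_le (h γ hγ)

theorem tendsto_atTop_inv_smul_sub_of_sq_norm_sub_le {E : Type*} [SeminormedAddCommGroup E]
    [NormedSpace ℝ E] {x : E} {p : ℝ → E} {M : ℝ} (h : ∀ γ, 0 < γ → ‖x - p γ‖ ^ 2 ≤ M * γ) :
    Tendsto (fun γ => γ⁻¹ • (x - p γ)) atTop (𝓝 0) := by
  have hsqrt : Tendsto (fun γ : ℝ => √(M * γ⁻¹)) atTop (𝓝 0) := by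
    simpa [Function.comp_def] using
      ((continuous_const.mul continuous_id).sqrt.tendsto 0).comp tendsto_inv_atTop_zero
  refine squeeze_zero_norm' ?_ hsqrt
  filter_upwards [eventually_gt_atTop 0] with γ hγ
  rw [norm_smul, Real.norm_of_nonneg (inv_nonneg.2 hγ.le)]
  apply Real.le_sqrt_of_sq_le
  calc (γ⁻¹ * ‖x - p γ‖) ^ 2 = γ⁻¹ ^ 2 * ‖x - p γ‖ ^ 2 := by ring
    _ ≤ γ⁻¹ ^ 2 * (M * γ) := by gcongr; exact h γ hγ
    _ = M * γ⁻¹ := by field_simp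

theorem stmt_15_general {X : Type*} [NormedAddCommGroup X] [InnerProductSpace ℝ X]
    (A : X → Set X) (x xs : X)
    (J : ℝ → X → X) (hJ : ∀ γ : ℝ, 0 < γ → IsResolvent A γ (J γ))
    (hbdd : (⨆ (γ : ℝ) (_ : 0 < γ),
        ((‖x - J γ (x + γ • xs)‖ ^ 2 / γ : ℝ) : EReal)) < ⊤) :
    x ∈ closure {z : X | (A z).Nonempty} ∧ xs ∈ closure {v : X | ∃ z, v ∈ A z} := by
  obtain ⟨M, hM⟩ := exists_le_of_iSup₂_coe_lt_top hbdd
  set p : ℝ → X := fun γ => J γ (x + γ • xs)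
  have hp : ∀ γ, 0 < γ → ‖x - p γ‖ ^ 2 ≤ M * γ := fun γ hγ =>
    (div_le_iff₀ hγ).mp (hM γ hγ)
  have hmem : ∀ γ, 0 < γ → xs + γ⁻¹ • (x - p γ) ∈ A (p γ) := fun γ hγ => by
    convert (hJ γ hγ).inv_smul_sub_mem (x + γ • xs) using 1
    rw [add_sub_right_comm, smul_add, smul_smul, inv_mul_cancel₀ hγ.ne', one_smul, add_comm]
  constructor
  · exact mem_closure_of_tendsto (tendsto_nhdsGT_zero_of_sq_norm_sub_le hp)
      (eventually_nhdsWithin_of_forall fun γ hγ => ⟨_, hmem γ hγ⟩)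
  · have hlim := (tendsto_atTop_inv_smul_sub_of_sq_norm_sub_le hp).const_add xs
    rw [add_zero] at hlim
    exact mem_closure_of_tendsto hlim ((eventually_gt_atTop 0).mono fun γ hγ => ⟨_, hmem γ hγ⟩)

theorem stmt_15 {X : Type*} [NormedAddCommGroup X] [InnerProductSpace ℝ X] [CompleteSpace X]
    (A : X → Set X) (hA : IsMaxMonotone A) (x xs : X)
    (J : ℝ → X → X) (hJ : ∀ γ : ℝ, 0 < γ → IsResolvent A γ (J γ))
    (hbdd : (⨆ (γ : ℝ) (_ : 0 < γ),
        ((‖x - J γ (x + γ • xs)‖ ^ 2 / γ : ℝ) : EReal)) < ⊤) :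
    x ∈ closure {z : X | (A z).Nonempty} ∧ xs ∈ closure {v : X | ∃ z, v ∈ A z} :=
  stmt_15_general A x xs J hJ hbdd
end

section
/- Let X be a real Hilbert space, let A : X ⇉ X be maximally monotone, let n ≥ 2, let (x,x*) ∈ X × X, and let γ_1, …, γ_{n−1} > 0. Define recursively a_0* = x*, and for k = 1, …, n−1: a_k = J_{γ_k A}(x + γ_k a_{k−1}*) and a_k* = (x + γ_k a_{k−1}* − a_k)/γ_k. Then F_{A,n}(x,x*) − ⟨x,x*⟩ ≥ Σ_{k=1}^{n−1} ‖x − J_{γ_k A}(x + γ_k a_{k−1}*)‖²/γ_k. -/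
open scoped RealInnerProductSpace

/-- The Fitzpatrick function of order `n` of a set-valued operator `A`:
the supremum over tuples `(a_1, a_1*), …, (a_{n−1}, a_{n−1}*)` in the graph of `A` of
`⟨x,x*⟩ + ⟨x − a_{n−1}, a_{n−1}*⟩ + ⟨a_1 − x, x*⟩ + Σ_{k=1}^{n−2} ⟨a_{k+1} − a_k, a_k*⟩`. -/
noncomputable def FitzN {X : Type*} [NormedAddCommGroup X] [InnerProductSpace ℝ X]
    (A : X → Set X) (n : ℕ) (x xs : X) : EReal :=
  ⨆ (a : ℕ → X × X) (_ : ∀ k ∈ Finset.Icc 1 (n - 1), (a k).2 ∈ A (a k).1),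
    ((⟪x, xs⟫ + ⟪x - (a (n - 1)).1, (a (n - 1)).2⟫ + ⟪(a 1).1 - x, xs⟫
        + ∑ k ∈ Finset.Icc 1 (n - 2), ⟪(a (k + 1)).1 - (a k).1, (a k).2⟫ : ℝ) : EReal)

private lemma tele {X : Type*} [NormedAddCommGroup X] [InnerProductSpace ℝ X]
    (x : X) (a as : ℕ → X) :
    ∀ m, 1 ≤ m →
      ⟪x - a m, as m⟫ + ⟪a 1 - x, as 0⟫
        + ∑ k ∈ Finset.Icc 1 (m - 1), ⟪a (k + 1) - a k, as k⟫
      = ∑ k ∈ Finset.Icc 1 m, ⟪x - a k, as k - as (k - 1)⟫ := by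
  intro m hm
  induction m, hm using Nat.le_induction with
  | base =>
    simp [inner_sub_right, inner_sub_left]
    ring
  | succ m hm ih =>
    rw [show m + 1 - 1 = m from rfl,
      Finset.sum_Icc_succ_top (by omega : 1 ≤ m + 1), ← ih,
      show Finset.Icc 1 m = Finset.Icc 1 (m - 1 + 1) from by rw [Nat.sub_add_cancel hm],
      Finset.sum_Icc_succ_top (by omega : 1 ≤ m - 1 + 1), Nat.sub_add_cancel hm]
    simp [inner_sub_right, inner_sub_left]
    ring

theorem stmt_18 {X : Type*} [NormedAddCommGroup X] [InnerProductSpace ℝ X] [CompleteSpace X]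
    (A : X → Set X) (hA : IsMaxMonotone A) (n : ℕ) (hn : 2 ≤ n) (x xs : X)
    (γ : ℕ → ℝ) (hγ : ∀ k ∈ Finset.Icc 1 (n - 1), 0 < γ k)
    (J : ℝ → X → X) (hJ : ∀ g : ℝ, 0 < g → IsResolvent A g (J g))
    (a as : ℕ → X) (has0 : as 0 = xs)
    (hrec : ∀ k ∈ Finset.Icc 1 (n - 1),
      a k = J (γ k) (x + γ k • as (k - 1)) ∧
      as k = (γ k)⁻¹ • (x + γ k • as (k - 1) - a k)) :
    FitzN A n x xs - ((⟪x, xs⟫ : ℝ) : EReal)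
      ≥ ((∑ k ∈ Finset.Icc 1 (n - 1),
          ‖x - J (γ k) (x + γ k • as (k - 1))‖ ^ 2 / γ k : ℝ) : EReal) := by
  set m := n - 1 with hmdef
  have hm : 1 ≤ m := by omega
  -- membership of the constructed tuple in the graph
  have hmem : ∀ k ∈ Finset.Icc 1 m, ((fun k => (a k, as k)) k).2 ∈ A ((fun k => (a k, as k)) k).1 := by
    intro k hk
    obtain ⟨h1, h2⟩ := hrec k hk
    have hγk := hγ k hk
    have := ((hJ (γ k) hγk) (x + γ k • as (k - 1)) (a k)).mp h1.symm
    simpa [h2] using this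
  -- each summand equals an inner product
  have hterm : ∀ k ∈ Finset.Icc 1 m,
      ‖x - J (γ k) (x + γ k • as (k - 1))‖ ^ 2 / γ k
        = ⟪x - a k, as k - as (k - 1)⟫ := by
    intro k hk
    obtain ⟨h1, h2⟩ := hrec k hk
    have hγk := hγ k hk
    have hdiff : as k - as (k - 1) = (γ k)⁻¹ • (x - a k) := by
      rw [h2]
      rw [smul_sub, smul_add, inv_smul_smul₀ (ne_of_gt hγk)]
      module
    rw [← h1, hdiff, real_inner_smul_right, real_inner_self_eq_norm_sq]
    ring
  rw [Finset.sum_congr rfl hterm, ← tele x a as m hm, has0]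
  -- value of FitzN at the tuple
  set V : ℝ := ⟪x, xs⟫ + ⟪x - a m, as m⟫ + ⟪a 1 - x, xs⟫
      + ∑ k ∈ Finset.Icc 1 (n - 2), ⟪a (k + 1) - a k, as k⟫ with hV
  have hFitz : ((V : ℝ) : EReal) ≤ FitzN A n x xs := by
    refine le_trans ?_ (le_iSup _ (fun k => (a k, as k)))
    exact le_iSup (fun _ => (((⟪x, xs⟫ + ⟪x - a m, as m⟫ + ⟪a 1 - x, xs⟫
      + ∑ k ∈ Finset.Icc 1 (n - 2), ⟪a (k + 1) - a k, as k⟫ : ℝ)) : EReal)) hmem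
  have hsum : ⟪x - a m, as m⟫ + ⟪a 1 - x, xs⟫
      + ∑ k ∈ Finset.Icc 1 (n - 2), ⟪a (k + 1) - a k, as k⟫ = V - ⟪x, xs⟫ := by
    rw [hV]; ring
  have hn2 : n - 2 = m - 1 := by omega
  rw [hn2] at hsum
  rw [hsum]
  calc ((V - ⟪x, xs⟫ : ℝ) : EReal) = ((V : ℝ) : EReal) - ((⟪x, xs⟫ : ℝ) : EReal) := by
        rw [EReal.coe_sub]
    _ ≤ FitzN A n x xs - ((⟪x, xs⟫ : ℝ) : EReal) := by
        exact EReal.sub_le_sub hFitz le_rfl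
end

section
/- (Series lower bound) Let X be a real Hilbert space, let f : X → ℝ∪{+∞} be convex, lower semicontinuous, and proper, let x, x* ∈ X, and let (γ_n)_{n≥1} be a sequence of positive real numbers. Define a_0* = x*, and for n ≥ 1: a_n = Prox_{γ_n f}(x + γ_n a_{n−1}*) and a_n* = (x + γ_n a_{n−1}* − a_n)/γ_n. Then f(x) + f*(x*) − ⟨x,x*⟩ ≥ Σ_{k=1}^{∞} ‖x − Prox_{γ_k f}(x + γ_k a_{k−1}*)‖²/γ_k. -/
open scoped RealInnerProductSpace ENNReal

lemma prox_subgrad {X : Type*} [NormedAddCommGroup X] [InnerProductSpace ℝ X]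
    (f : X → EReal) (hf : IsProperConvexLsc f) {γ : ℝ} (hγ : 0 < γ) (z p : X)
    (hp : ∀ y, f p + ((‖p - z‖ ^ 2 / (2 * γ) : ℝ) : EReal)
              ≤ f y + ((‖y - z‖ ^ 2 / (2 * γ) : ℝ) : EReal)) :
    ∃ r : ℝ, f p = (r : EReal) ∧
      ∀ y : X, ((r + ⟪γ⁻¹ • (z - p), y - p⟫ : ℝ) : EReal) ≤ f y := by
  obtain ⟨hbot, ⟨z0, hz0⟩, _, hconv⟩ := hf
  have hr0 : f z0 = ((f z0).toReal : EReal) := (EReal.coe_toReal hz0 (hbot z0)).symm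
  have hpt : f p ≠ ⊤ := by
    intro h
    have h2 := hp z0
    rw [h, hr0, EReal.top_add_of_ne_bot (EReal.coe_ne_bot _), ← EReal.coe_add] at h2
    exact (EReal.coe_lt_top _).not_ge h2
  set r : ℝ := (f p).toReal with hrdef
  have hfp : f p = (r : EReal) := (EReal.coe_toReal hpt (hbot p)).symm
  refine ⟨r, hfp, fun y => ?_⟩
  by_cases hy : f y = ⊤
  · rw [hy]; exact le_top
  have hfy : f y = (((f y).toReal : ℝ) : EReal) := (EReal.coe_toReal hy (hbot y)).symm
  set s : ℝ := (f y).toReal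
  rw [hfy, EReal.coe_le_coe_iff]
  set I : ℝ := ⟪p - z, y - p⟫ with hI
  set Q : ℝ := ‖y - p‖ ^ 2 with hQ
  have hQ0 : 0 ≤ Q := by positivity
  have hvI : ⟪γ⁻¹ • (z - p), y - p⟫ = -(γ⁻¹ * I) := by
    rw [real_inner_smul_left, hI]
    have : (z - p) = -(p - z) := by abel
    rw [this, inner_neg_left]; ring
  rw [hvI]
  -- key step inequality for all t ∈ (0,1]
  have h_t : ∀ t : ℝ, 0 < t → t ≤ 1 →
      t * (r - s) * (2 * γ) ≤ 2 * t * I + t ^ 2 * Q := by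
    intro t ht ht1
    set yt : X := p + t • (y - p) with hyt
    have hcomb : (1 - t) • p + t • y = yt := by
      rw [hyt]; module
    have hcv := hconv p y (1 - t) t (by linarith) ht.le (by ring)
    rw [hcomb, hfp, hfy, ← EReal.coe_mul, ← EReal.coe_mul, ← EReal.coe_add] at hcv
    have hytt : f yt ≠ ⊤ := by
      intro h; rw [h] at hcv; exact (EReal.coe_lt_top _).not_ge hcv
    have hfyt : f yt = (((f yt).toReal : ℝ) : EReal) := (EReal.coe_toReal hytt (hbot yt)).symm
    set u : ℝ := (f yt).toReal
    rw [hfyt, EReal.coe_le_coe_iff] at hcv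
    have hprox := hp yt
    rw [hfp, hfyt, ← EReal.coe_add, ← EReal.coe_add, EReal.coe_le_coe_iff] at hprox
    have hnorm : ‖yt - z‖ ^ 2 = ‖p - z‖ ^ 2 + 2 * t * I + t ^ 2 * Q := by
      have : yt - z = (p - z) + t • (y - p) := by rw [hyt]; abel
      rw [this, norm_add_sq_real, real_inner_smul_right, norm_smul, mul_pow]
      simp [abs_of_pos ht, hI, hQ]
      ring
    have hG : (0:ℝ) < 2 * γ := by linarith
    have key : ‖p - z‖ ^ 2 - ‖yt - z‖ ^ 2 ≤ (u - r) * (2 * γ) := by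
      rw [← div_le_iff₀ hG, sub_div]
      linarith [hprox]
    have hub : (u - r) * (2 * γ) ≤ (t * (s - r)) * (2 * γ) := by
      apply mul_le_mul_of_nonneg_right _ hG.le
      linarith [hcv]
    nlinarith [key, hub, hnorm]
  -- pass to the limit t → 0
  have hC : 0 ≤ Q / (2 * γ) := by positivity
  have h_t' : ∀ t : ℝ, 0 < t → t ≤ 1 → r - s ≤ γ⁻¹ * I + t * (Q / (2 * γ)) := by
    intro t ht ht1
    have hpos : (0:ℝ) < t * (2 * γ) := by positivity
    have expand : (γ⁻¹ * I + t * (Q / (2 * γ))) * (t * (2 * γ)) = 2 * t * I + t ^ 2 * Q := by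
      field_simp
    have := h_t t ht ht1
    have h3 : (r - s) * (t * (2 * γ)) ≤ (γ⁻¹ * I + t * (Q / (2 * γ))) * (t * (2 * γ)) := by
      rw [expand]; nlinarith [this]
    exact le_of_mul_le_mul_right h3 hpos
  have hfinal : r - s ≤ γ⁻¹ * I := by
    apply le_of_forall_pos_le_add
    intro ε hε
    set C : ℝ := Q / (2 * γ)
    have hC1 : (0:ℝ) < C + 1 := by linarith
    set t : ℝ := min 1 (ε / (C + 1)) with htdef
    have ht0 : 0 < t := lt_min one_pos (div_pos hε hC1)
    have ht1 : t ≤ 1 := min_le_left _ _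
    have h4 := h_t' t ht0 ht1
    have h5 : t * C ≤ ε := by
      have h6 : t ≤ ε / (C + 1) := min_le_right _ _
      have h7 : t * C ≤ (ε / (C + 1)) * C := mul_le_mul_of_nonneg_right h6 hC
      have h8 : (ε / (C + 1)) * C ≤ ε := by
        rw [div_mul_eq_mul_div, div_le_iff₀ hC1]
        nlinarith
      linarith
    linarith
  linarith

lemma le_conj {X : Type*} [NormedAddCommGroup X] [InnerProductSpace ℝ X]
    (f : X → EReal) (v y : X) : (((⟪y, v⟫ : ℝ) : EReal) - f y) ≤ conj f v :=
  le_iSup (fun z => (((⟪z, v⟫ : ℝ) : EReal) - f z)) y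

lemma conj_of_subgrad {X : Type*} [NormedAddCommGroup X] [InnerProductSpace ℝ X]
    (f : X → EReal) (hbot : ∀ z, f z ≠ ⊥) (p v : X) (r : ℝ) (hfp : f p = (r : EReal))
    (hsub : ∀ y : X, ((r + ⟪v, y - p⟫ : ℝ) : EReal) ≤ f y) :
    conj f v = ((⟪p, v⟫ - r : ℝ) : EReal) := by
  apply le_antisymm
  · apply iSup_le
    intro y
    by_cases hy : f y = ⊤
    · rw [hy]
      simp
    · have hfy : f y = (((f y).toReal : ℝ) : EReal) := (EReal.coe_toReal hy (hbot y)).symm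
      set s : ℝ := (f y).toReal
      have h1 := hsub y
      rw [hfy, EReal.coe_le_coe_iff] at h1
      rw [hfy, ← EReal.coe_sub, EReal.coe_le_coe_iff]
      have h2 : ⟪v, y - p⟫ = ⟪v, y⟫ - ⟪v, p⟫ := inner_sub_right v y p
      rw [h2] at h1
      linarith [real_inner_comm y v, real_inner_comm p v]
  · have h := le_conj f v p
    rw [hfp, ← EReal.coe_sub] at h
    exact h

theorem stmt_19 {X : Type*} [NormedAddCommGroup X] [InnerProductSpace ℝ X] [CompleteSpace X]
    (f : X → EReal) (hf : IsProperConvexLsc f) (x xs : X)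
    (γ : ℕ → ℝ) (hγ : ∀ n : ℕ, 1 ≤ n → 0 < γ n)
    (P : ℝ → X → X) (hP : ∀ g : ℝ, 0 < g → IsProx f g (P g))
    (a as : ℕ → X) (has0 : as 0 = xs)
    (hrec : ∀ n : ℕ, 1 ≤ n →
      a n = P (γ n) (x + γ n • as (n - 1)) ∧
      as n = (γ n)⁻¹ • (x + γ n • as (n - 1) - a n)) :
    ((∑' k : ℕ, ENNReal.ofReal
        (‖x - P (γ (k + 1)) (x + γ (k + 1) • as k)‖ ^ 2 / γ (k + 1)) : ℝ≥0∞) : EReal)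
      ≤ f x + conj f xs - ((⟪x, xs⟫ : ℝ) : EReal) := by
  have hbot := hf.1
  -- the conjugate is never ⊥
  have hcbot : conj f xs ≠ ⊥ := by
    obtain ⟨z0, hz0⟩ := hf.2.1
    have hz0r : f z0 = ((f z0).toReal : EReal) := (EReal.coe_toReal hz0 (hbot z0)).symm
    have h := le_conj f xs z0
    rw [hz0r, ← EReal.coe_sub] at h
    intro hb
    rw [hb, le_bot_iff] at h
    exact EReal.coe_ne_bot _ h
  by_cases hfxT : f x = ⊤
  · rw [hfxT, EReal.top_add_of_ne_bot hcbot, EReal.top_sub_coe]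
    exact le_top
  by_cases hcT : conj f xs = ⊤
  · rw [hcT, EReal.add_top_of_ne_bot (hbot x), EReal.top_sub_coe]
    exact le_top
  -- real values
  set fx : ℝ := (f x).toReal with hfxdef
  have hfx' : f x = (fx : EReal) := (EReal.coe_toReal hfxT (hbot x)).symm
  set cs : ℝ := (conj f xs).toReal with hcsdef
  have hcs' : conj f xs = (cs : EReal) := (EReal.coe_toReal hcT hcbot).symm
  -- per-step data from the prox characterization
  have hk : ∀ k : ℕ, ∃ r : ℝ, f (a (k + 1)) = (r : EReal) ∧
      (∀ y, ((r + ⟪as (k + 1), y - a (k + 1)⟫ : ℝ) : EReal) ≤ f y) ∧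
      conj f (as (k + 1)) = ((⟪a (k + 1), as (k + 1)⟫ - r : ℝ) : EReal) := by
    intro k
    obtain ⟨ha, has⟩ := hrec (k + 1) (by omega)
    have hγn := hγ (k + 1) (by omega)
    set z := x + γ (k + 1) • as k with hz
    have hasn : as (k + 1) = (γ (k + 1))⁻¹ • (z - a (k + 1)) := by
      simpa using has
    have hp := ((hP (γ (k + 1)) hγn) z).1
    have haz : a (k + 1) = P (γ (k + 1)) z := by simpa using ha
    rw [← haz] at hp
    obtain ⟨r, hr1, hr2⟩ := prox_subgrad f hf hγn z (a (k + 1)) hp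
    have hsub : ∀ y, ((r + ⟪as (k + 1), y - a (k + 1)⟫ : ℝ) : EReal) ≤ f y := by
      intro y; rw [hasn]; exact hr2 y
    exact ⟨r, hr1, hsub, conj_of_subgrad f hbot (a (k + 1)) (as (k + 1)) r hr1 hsub⟩
  choose r hr1 hr2 hr3 using hk
  -- real values of the conjugates along the iteration
  set c : ℕ → ℝ := fun j => (conj f (as j)).toReal with hcdef
  have hc : ∀ j, conj f (as j) = ((c j : ℝ) : EReal) := by
    intro j
    cases j with
    | zero => simp only [hcdef]; rw [has0]; exact hcs'
    | succ k => simp only [hcdef]; rw [hr3 k, EReal.toReal_coe]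
  have hc0 : c 0 = cs := by simp only [hcdef]; rw [has0, hcs']; simp
  have hcB : ∀ k, c (k + 1) = ⟪a (k + 1), as (k + 1)⟫ - r k := by
    intro k
    have h := hr3 k
    rw [hc (k + 1)] at h
    exact_mod_cast h
  have hA : ∀ k, ⟪a (k + 1), as k⟫ - r k ≤ c k := by
    intro k
    have h := le_conj f (as k) (a (k + 1))
    rw [hr1 k, ← EReal.coe_sub, hc k, EReal.coe_le_coe_iff] at h
    exact h
  -- the recursion for as
  have hrel : ∀ k, as (k + 1) = as k + (γ (k + 1))⁻¹ • (x - a (k + 1)) := by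
    intro k
    have h := (hrec (k + 1) (by omega)).2
    have hγ1 : γ (k + 1) ≠ 0 := (hγ (k + 1) (by omega)).ne'
    simp only [Nat.add_sub_cancel] at h
    rw [h, show x + γ (k + 1) • as k - a (k + 1)
        = γ (k + 1) • as k + (x - a (k + 1)) from by abel, smul_add,
      inv_smul_smul₀ hγ1]
  -- inner products with x
  have hE : ∀ n, ⟪x, as n⟫ = ⟪x, xs⟫
      + ∑ j ∈ Finset.range n, (γ (j + 1))⁻¹ * ⟪x, x - a (j + 1)⟫ := by
    intro n
    induction n with
    | zero => simp [has0]
    | succ n ih =>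
      rw [hrel n, inner_add_right, real_inner_smul_right, ih, Finset.sum_range_succ]
      ring
  -- telescoping bound
  have hstep : ∀ k, (γ (k + 1))⁻¹ * ⟪a (k + 1), a (k + 1) - x⟫ ≤ c k - c (k + 1) := by
    intro k
    have h1 := hA k
    have h2 := hcB k
    have h3 : ⟪a (k + 1), as k⟫ - ⟪a (k + 1), as (k + 1)⟫
        = (γ (k + 1))⁻¹ * ⟪a (k + 1), a (k + 1) - x⟫ := by
      rw [← inner_sub_right, hrel k,
        show as k - (as k + (γ (k + 1))⁻¹ • (x - a (k + 1)))
          = (γ (k + 1))⁻¹ • (a (k + 1) - x) from by module,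
        real_inner_smul_right]
    linarith
  have hT : ∀ n, ∑ j ∈ Finset.range n, (γ (j + 1))⁻¹ * ⟪a (j + 1), a (j + 1) - x⟫
      ≤ cs - c n := by
    intro n
    induction n with
    | zero => simp [hc0]
    | succ n ih =>
      rw [Finset.sum_range_succ]
      have := hstep n
      linarith
  have hD : ∀ n, ⟪x, as n⟫ - fx ≤ c n := by
    intro n
    have h := le_conj f (as n) x
    rw [hfx', ← EReal.coe_sub, hc n, EReal.coe_le_coe_iff] at h
    exact h
  -- the final real bound on partial sums
  have hbound : ∀ n, ∑ j ∈ Finset.range n, ‖x - a (j + 1)‖ ^ 2 / γ (j + 1)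
      ≤ fx + cs - ⟪x, xs⟫ := by
    intro n
    have h1 := hT n
    have h2 := hD n
    have h3 := hE n
    have h4 : ∀ j, ‖x - a (j + 1)‖ ^ 2
        = ⟪x, x - a (j + 1)⟫ + ⟪a (j + 1), a (j + 1) - x⟫ := by
      intro j
      rw [← real_inner_self_eq_norm_sq, inner_sub_left]
      have h5 : ⟪a (j + 1), x - a (j + 1)⟫ = -⟪a (j + 1), a (j + 1) - x⟫ := by
        rw [← inner_neg_right]
        congr 1
        abel
      linarith
    have h6 : ∑ j ∈ Finset.range n, ‖x - a (j + 1)‖ ^ 2 / γ (j + 1)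
        = (∑ j ∈ Finset.range n, (γ (j + 1))⁻¹ * ⟪x, x - a (j + 1)⟫)
          + ∑ j ∈ Finset.range n, (γ (j + 1))⁻¹ * ⟪a (j + 1), a (j + 1) - x⟫ := by
      rw [← Finset.sum_add_distrib]
      apply Finset.sum_congr rfl
      intro j _
      rw [h4 j]
      ring
    rw [h6]
    linarith
  have hB0 : 0 ≤ fx + cs - ⟪x, xs⟫ := by simpa using hbound 0
  have hterm : ∀ j : ℕ, 0 ≤ ‖x - a (j + 1)‖ ^ 2 / γ (j + 1) := by
    intro j
    have := hγ (j + 1) (by omega)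
    positivity
  -- rewrite the prox in the goal
  have hPa : ∀ k : ℕ, P (γ (k + 1)) (x + γ (k + 1) • as k) = a (k + 1) := by
    intro k
    have := (hrec (k + 1) (by omega)).1
    simpa using this.symm
  have htsum : (∑' k : ℕ, ENNReal.ofReal
      (‖x - P (γ (k + 1)) (x + γ (k + 1) • as k)‖ ^ 2 / γ (k + 1)) : ℝ≥0∞)
      ≤ ENNReal.ofReal (fx + cs - ⟪x, xs⟫) := by
    rw [ENNReal.tsum_eq_iSup_sum]
    apply iSup_le
    intro s
    obtain ⟨n, hs⟩ := s.exists_nat_subset_range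
    calc ∑ i ∈ s, ENNReal.ofReal
          (‖x - P (γ (i + 1)) (x + γ (i + 1) • as i)‖ ^ 2 / γ (i + 1))
        ≤ ∑ i ∈ Finset.range n, ENNReal.ofReal
          (‖x - P (γ (i + 1)) (x + γ (i + 1) • as i)‖ ^ 2 / γ (i + 1)) :=
          Finset.sum_le_sum_of_subset hs
      _ = ∑ i ∈ Finset.range n, ENNReal.ofReal (‖x - a (i + 1)‖ ^ 2 / γ (i + 1)) := by
          apply Finset.sum_congr rfl
          intro i _
          rw [hPa i]
      _ = ENNReal.ofReal (∑ i ∈ Finset.range n, ‖x - a (i + 1)‖ ^ 2 / γ (i + 1)) :=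
          (ENNReal.ofReal_sum_of_nonneg (fun i _ => hterm i)).symm
      _ ≤ ENNReal.ofReal (fx + cs - ⟪x, xs⟫) := ENNReal.ofReal_le_ofReal (hbound n)
  calc ((∑' k : ℕ, ENNReal.ofReal
        (‖x - P (γ (k + 1)) (x + γ (k + 1) • as k)‖ ^ 2 / γ (k + 1)) : ℝ≥0∞) : EReal)
      ≤ ((ENNReal.ofReal (fx + cs - ⟪x, xs⟫) : ℝ≥0∞) : EReal) :=
        EReal.coe_ennreal_le_coe_ennreal_iff.mpr htsum
    _ = ((fx + cs - ⟪x, xs⟫ : ℝ) : EReal) := by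
        rw [EReal.coe_ennreal_ofReal, max_eq_left hB0]
    _ ≤ f x + conj f xs - ((⟪x, xs⟫ : ℝ) : EReal) := by
        rw [hfx', hcs', ← EReal.coe_add, ← EReal.coe_sub]
end
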